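/- For every ε > 0 and finite set Ω there exists n_0 such that for every n ≥ n_0, every (ε²/4)-symmetric probability measure μ on Ω^n satisfies Δ_⊘(μ, ⊗_{i=1}^n μ_i) < ε, where Δ_⊘ is the discrete cut distance without coordinate permutation. -/
import Mathlib


open scoped BigOperators
open Finset

def IsProb {Ω : Type*} [Fintype Ω] {n : ℕ} (μ : (Fin n → Ω) → ℝ) : Prop :=
  (∀ σ, 0 ≤ μ σ) ∧ ∑ σ, μ σ = 1

noncomputable def marg {Ω : Type*} [Fintype Ω] [DecidableEq Ω] {n : ℕ}
    (μ : (Fin n → Ω) → ℝ) (i : Fin n) (ω : Ω) : ℝ :=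
  ∑ σ, if σ i = ω then μ σ else 0

noncomputable def marg2 {Ω : Type*} [Fintype Ω] [DecidableEq Ω] {n : ℕ}
    (μ : (Fin n → Ω) → ℝ) (i j : Fin n) (ω ω' : Ω) : ℝ :=
  ∑ σ, if σ i = ω ∧ σ j = ω' then μ σ else 0

noncomputable def dTV2 {Ω : Type*} [Fintype Ω] (p q : Ω → Ω → ℝ) : ℝ :=
  (1 / 2) * ∑ ω, ∑ ω', |p ω ω' - q ω ω'|

/-- `μ` is `δ`-symmetric if `∑_{1 ≤ i < i' ≤ n} d_TV(μ_{i,i'}, μ_i ⊗ μ_{i'}) < δ n²`. -/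
noncomputable def DeltaSymmetric {Ω : Type*} [Fintype Ω] [DecidableEq Ω] {n : ℕ}
    (δ : ℝ) (μ : (Fin n → Ω) → ℝ) : Prop :=
  ∑ i : Fin n, ∑ i' : Fin n, (if i < i' then
      dTV2 (marg2 μ i i') (fun ω ω' => marg μ i ω * marg μ i' ω') else 0)
    < δ * n ^ 2

/-- The product measure with the same marginals as `μ`. -/
noncomputable def prodOfMarginals {Ω : Type*} [Fintype Ω] [DecidableEq Ω] {n : ℕ}
    (μ : (Fin n → Ω) → ℝ) : (Fin n → Ω) → ℝ := fun σ => ∏ i, marg μ i (σ i)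

/-- The discrete cut distance without coordinate permutation `Δ_⊘(μ,ν)`. -/
noncomputable def cutDiscS {Ω : Type*} [Fintype Ω] [DecidableEq Ω] (n : ℕ)
    (μ ν : (Fin n → Ω) → ℝ) : ℝ :=
  sInf { d | ∃ γ : ((Fin n → Ω) × (Fin n → Ω)) → ℝ,
    (∀ p, 0 ≤ γ p) ∧ (∀ σ, ∑ τ, γ (σ, τ) = μ σ) ∧ (∀ τ, ∑ σ, γ (σ, τ) = ν τ) ∧
    d = ⨆ S : Finset ((Fin n → Ω) × (Fin n → Ω)), ⨆ X : Finset (Fin n), ⨆ ω : Ω,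
      |∑ p ∈ S, ∑ x ∈ X,
        γ p * ((if p.1 x = ω then (1 : ℝ) else 0) - (if p.2 x = ω then 1 else 0))| / n }

section Aux
variable {Ω : Type*} [Fintype Ω] [DecidableEq Ω] {n : ℕ}

lemma marg_nonneg (μ : (Fin n → Ω) → ℝ) (h : IsProb μ) (i : Fin n) (ω : Ω) :
    0 ≤ marg μ i ω :=
  Finset.sum_nonneg fun σ _ => by by_cases hσ : σ i = ω <;> simp [hσ, h.1 σ]

lemma marg_sum_one (μ : (Fin n → Ω) → ℝ) (h : IsProb μ) (i : Fin n) :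
    ∑ ω, marg μ i ω = 1 := by
  unfold marg
  rw [Finset.sum_comm]
  simpa [Finset.sum_ite_eq] using h.2

lemma marg_le_one (μ : (Fin n → Ω) → ℝ) (h : IsProb μ) (i : Fin n) (ω : Ω) :
    marg μ i ω ≤ 1 := by
  rw [← marg_sum_one μ h i]
  exact Finset.single_le_sum (fun ω' _ => marg_nonneg μ h i ω') (mem_univ ω)

lemma marg2_sum_one (μ : (Fin n → Ω) → ℝ) (h : IsProb μ) (i j : Fin n) :
    ∑ ω, ∑ ω', marg2 μ i j ω ω' = 1 := by
  unfold marg2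
  have e1 : ∀ ω : Ω, (∑ ω' : Ω, ∑ σ : Fin n → Ω, if σ i = ω ∧ σ j = ω' then μ σ else 0)
      = ∑ σ : Fin n → Ω, ∑ ω' : Ω, (if σ i = ω ∧ σ j = ω' then μ σ else 0) :=
    fun ω => Finset.sum_comm
  simp only [e1]
  rw [Finset.sum_comm]
  have e2 : ∀ σ : Fin n → Ω,
      (∑ ω : Ω, ∑ ω' : Ω, if σ i = ω ∧ σ j = ω' then μ σ else 0) = μ σ := by
    intro σ; simp [ite_and, Finset.sum_ite_eq]
  simp only [e2]; exact h.2

lemma marg2_swap (μ : (Fin n → Ω) → ℝ) (i j : Fin n) (ω ω' : Ω) :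
    marg2 μ j i ω' ω = marg2 μ i j ω ω' := by
  unfold marg2
  exact Finset.sum_congr rfl fun σ _ => by
    by_cases h1 : σ i = ω <;> by_cases h2 : σ j = ω' <;> simp [h1, h2]

lemma dTV2_nonneg (p q : Ω → Ω → ℝ) : 0 ≤ dTV2 p q := by
  unfold dTV2
  positivity

lemma abs_sub_le_half {ι : Type*} [Fintype ι] [DecidableEq ι] (f g : ι → ℝ)
    (h : ∑ x, f x = ∑ x, g x) (a : ι) :
    |f a - g a| ≤ (1 / 2) * ∑ x, |f x - g x| := by
  have h0 : ∑ x, (f x - g x) = 0 := by rw [Finset.sum_sub_distrib, h, sub_self]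
  have h1 : f a - g a + ∑ x ∈ univ.erase a, (f x - g x) = 0 := by
    rw [Finset.add_sum_erase univ (fun x => f x - g x) (mem_univ a), h0]
  have h2 : |∑ x ∈ univ.erase a, (f x - g x)| ≤ ∑ x ∈ univ.erase a, |f x - g x| :=
    Finset.abs_sum_le_sum_abs _ _
  have h3 : |f a - g a| + ∑ x ∈ univ.erase a, |f x - g x| = ∑ x, |f x - g x| :=
    Finset.add_sum_erase univ (fun x => |f x - g x|) (mem_univ a)
  have h4 : |f a - g a| = |∑ x ∈ univ.erase a, (f x - g x)| := by
    rw [show (∑ x ∈ univ.erase a, (f x - g x)) = -(f a - g a) by linarith, abs_neg]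
  linarith

lemma point_le_dTV2 (p r : Ω → Ω → ℝ) (hp : ∑ ω, ∑ ω', p ω ω' = 1)
    (hr : ∑ ω, ∑ ω', r ω ω' = 1) (a b : Ω) :
    p a b - r a b ≤ dTV2 p r := by
  have key := abs_sub_le_half (fun z : Ω × Ω => p z.1 z.2) (fun z : Ω × Ω => r z.1 z.2)
    (by rw [Fintype.sum_prod_type, Fintype.sum_prod_type]; rw [hp, hr]) (a, b)
  have : dTV2 p r = (1 / 2) * ∑ z : Ω × Ω, |p z.1 z.2 - r z.1 z.2| := by
    unfold dTV2; rw [Fintype.sum_prod_type]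
  rw [this]
  exact le_trans (le_abs_self _) key



lemma prod_split_one (g : Fin n → ℝ) (i : Fin n) :
    ∏ k, g k = g i * ∏ k ∈ univ.erase i, g k :=
  (Finset.mul_prod_erase univ g (mem_univ i)).symm

lemma prod_split_two (g : Fin n → ℝ) {i j : Fin n} (hij : i ≠ j) :
    ∏ k, g k = g i * g j * ∏ k ∈ (univ.erase i).erase j, g k := by
  rw [← Finset.mul_prod_erase univ g (mem_univ i),
    ← Finset.mul_prod_erase (univ.erase i) g (Finset.mem_erase.mpr ⟨hij.symm, mem_univ j⟩),
    mul_assoc]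

/-- factorization: one marked coordinate -/
lemma sum_ind_prod (q : Fin n → Ω → ℝ) (hq : ∀ k, ∑ ω, q k ω = 1) (i : Fin n) (ω : Ω) :
    ∑ σ : Fin n → Ω, (if σ i = ω then (1 : ℝ) else 0) * ∏ k, q k (σ k) = q i ω := by
  set f : Fin n → Ω → ℝ := fun k x => if k = i then (if x = ω then q k x else 0) else q k x
    with hf
  have hpt : ∀ σ : Fin n → Ω,
      (if σ i = ω then (1 : ℝ) else 0) * ∏ k, q k (σ k) = ∏ k, f k (σ k) := by
    intro σ
    rw [prod_split_one (fun k => f k (σ k)) i, prod_split_one (fun k => q k (σ k)) i]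
    have e1 : ∏ k ∈ univ.erase i, f k (σ k) = ∏ k ∈ univ.erase i, q k (σ k) :=
      Finset.prod_congr rfl fun k hk => by simp [hf, (Finset.mem_erase.mp hk).1]
    rw [e1]
    by_cases h1 : σ i = ω <;> simp [hf, h1]
  simp only [hpt]
  rw [← Fintype.prod_sum f]
  rw [prod_split_one (fun k => ∑ x, f k x) i]
  have e2 : ∏ k ∈ univ.erase i, (∑ x, f k x) = 1 := by
    refine Finset.prod_eq_one fun k hk => ?_
    have := (Finset.mem_erase.mp hk).1
    simp only [hf, if_neg this]
    exact hq k
  have e3 : (∑ x, f i x) = q i ω := by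
    simp only [hf, if_pos rfl]
    rw [Finset.sum_ite_eq' univ ω (fun x => q i x)]
    simp
  rw [e2, e3, mul_one]

/-- factorization: two marked coordinates -/
lemma sum_ind2_prod (q : Fin n → Ω → ℝ) (hq : ∀ k, ∑ ω, q k ω = 1) {i j : Fin n}
    (hij : i ≠ j) (ω ω' : Ω) :
    ∑ σ : Fin n → Ω, (if σ i = ω then (1 : ℝ) else 0) * (if σ j = ω' then (1 : ℝ) else 0) *
      ∏ k, q k (σ k) = q i ω * q j ω' := by
  set f : Fin n → Ω → ℝ := fun k x =>
    if k = i then (if x = ω then q k x else 0)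
    else if k = j then (if x = ω' then q k x else 0) else q k x with hf
  have hpt : ∀ σ : Fin n → Ω,
      (if σ i = ω then (1 : ℝ) else 0) * (if σ j = ω' then (1 : ℝ) else 0) * ∏ k, q k (σ k)
        = ∏ k, f k (σ k) := by
    intro σ
    rw [prod_split_two (fun k => f k (σ k)) hij, prod_split_two (fun k => q k (σ k)) hij]
    have e1 : ∏ k ∈ (univ.erase i).erase j, f k (σ k)
        = ∏ k ∈ (univ.erase i).erase j, q k (σ k) := by
      refine Finset.prod_congr rfl fun k hk => ?_
      have h1 := (Finset.mem_erase.mp hk).1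
      have h2 := (Finset.mem_erase.mp (Finset.mem_erase.mp hk).2).1
      simp [hf, h1, h2]
    rw [e1]
    by_cases h1 : σ i = ω <;> by_cases h2 : σ j = ω' <;>
      simp [hf, h1, h2, hij, hij.symm] <;> ring
  simp only [hpt]
  rw [← Fintype.prod_sum f]
  rw [prod_split_two (fun k => ∑ x, f k x) hij]
  have e2 : ∏ k ∈ (univ.erase i).erase j, (∑ x, f k x) = 1 := by
    refine Finset.prod_eq_one fun k hk => ?_
    have h1 := (Finset.mem_erase.mp hk).1
    have h2 := (Finset.mem_erase.mp (Finset.mem_erase.mp hk).2).1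
    simp only [hf, if_neg h2, if_neg h1]
    exact hq k
  have e3 : (∑ x, f i x) = q i ω := by
    simp only [hf, if_pos rfl]
    rw [Finset.sum_ite_eq' univ ω (fun x => q i x)]; simp
  have e4 : (∑ x, f j x) = q j ω' := by
    simp [hf, hij.symm, Finset.sum_ite_eq']
  rw [e2, e3, e4, mul_one]



lemma prodOfMarginals_nonneg (μ : (Fin n → Ω) → ℝ) (h : IsProb μ) (τ : Fin n → Ω) :
    0 ≤ prodOfMarginals μ τ :=
  Finset.prod_nonneg fun i _ => marg_nonneg μ h i (τ i)

lemma prodOfMarginals_sum_one (μ : (Fin n → Ω) → ℝ) (h : IsProb μ) :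
    ∑ τ, prodOfMarginals μ τ = 1 := by
  unfold prodOfMarginals
  rw [← Fintype.prod_sum (fun k ω => marg μ k ω)]
  simp [marg_sum_one μ h]

lemma dTV2_prod_symm (μ : (Fin n → Ω) → ℝ) (x y : Fin n) :
    dTV2 (marg2 μ y x) (fun a b => marg μ y a * marg μ x b)
      = dTV2 (marg2 μ x y) (fun a b => marg μ x a * marg μ y b) := by
  unfold dTV2
  congr 1
  rw [Finset.sum_comm]
  refine Finset.sum_congr rfl fun a _ => Finset.sum_congr rfl fun b _ => ?_
  rw [marg2_swap μ x y a b]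
  show |marg2 μ x y a b - marg μ y b * marg μ x a| = _
  rw [mul_comm]

/-- The key second-moment bound for the product coupling. -/
lemma main_bound (μ : (Fin n → Ω) → ℝ) (hμ : IsProb μ)
    (S : Finset ((Fin n → Ω) × (Fin n → Ω))) (X : Finset (Fin n)) (ω : Ω) :
    |∑ p ∈ S, ∑ x ∈ X, (μ p.1 * prodOfMarginals μ p.2) *
        ((if p.1 x = ω then (1 : ℝ) else 0) - (if p.2 x = ω then 1 else 0))|
      ≤ Real.sqrt (2 * n + 2 * ∑ i : Fin n, ∑ i' : Fin n, (if i < i' then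
          dTV2 (marg2 μ i i') (fun a b => marg μ i a * marg μ i' b) else 0)) := by
  classical
  set q : Fin n → Ω → ℝ := marg μ with hqdef
  have hq1 : ∀ k, ∑ x, q k x = 1 := marg_sum_one μ hμ
  set ν : (Fin n → Ω) → ℝ := prodOfMarginals μ with hνdef
  have hν0 : ∀ τ, 0 ≤ ν τ := prodOfMarginals_nonneg μ hμ
  have hν1 : ∑ τ, ν τ = 1 := prodOfMarginals_sum_one μ hμ
  set γ : ((Fin n → Ω) × (Fin n → Ω)) → ℝ := fun p => μ p.1 * ν p.2 with hγdef
  have hγ0 : ∀ p, 0 ≤ γ p := fun p => mul_nonneg (hμ.1 p.1) (hν0 p.2)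
  have hγ1 : ∑ p, γ p = 1 := by
    rw [Fintype.sum_prod_type]
    simp only [hγdef, ← Finset.mul_sum]
    rw [Finset.sum_congr rfl fun σ _ => by rw [hν1, mul_one]]
    exact hμ.2
  set A : (Fin n → Ω) → ℝ := fun σ => ∑ x ∈ X, (if σ x = ω then (1 : ℝ) else 0) with hAdef
  set D : Fin n → Fin n → ℝ :=
    fun x y => dTV2 (marg2 μ x y) (fun a b => marg μ x a * marg μ y b) with hDdef
  have hD0 : ∀ x y, 0 ≤ D x y := fun x y => dTV2_nonneg _ _
  set Dsum : ℝ := ∑ i : Fin n, ∑ i' : Fin n, (if i < i' then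
      dTV2 (marg2 μ i i') (fun a b => marg μ i a * marg μ i' b) else 0) with hDsumdef
  have hDsum_eq : Dsum = ∑ i : Fin n, ∑ i' : Fin n, (if i < i' then D i i' else 0) := rfl
  set T : ℝ := ∑ p : (Fin n → Ω) × (Fin n → Ω), γ p * (A p.1 - A p.2) ^ 2 with hTdef
  -- Step 1: rewrite the inner sum
  have step1 : ∀ p : (Fin n → Ω) × (Fin n → Ω),
      (∑ x ∈ X, (μ p.1 * ν p.2) *
        ((if p.1 x = ω then (1 : ℝ) else 0) - (if p.2 x = ω then 1 else 0)))
      = γ p * (A p.1 - A p.2) := by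
    intro p
    rw [← Finset.mul_sum, Finset.sum_sub_distrib]
  -- Step 2: |∑_S| ≤ ∑_univ γ |A - A|
  have step2 : |∑ p ∈ S, γ p * (A p.1 - A p.2)| ≤ ∑ p, γ p * |A p.1 - A p.2| := by
    refine le_trans (Finset.abs_sum_le_sum_abs _ _) ?_
    refine le_trans (Finset.sum_le_sum (g := fun p => γ p * |A p.1 - A p.2|)
      fun p _ => by rw [abs_mul, abs_of_nonneg (hγ0 p)]) ?_
    exact Finset.sum_le_sum_of_subset_of_nonneg (Finset.subset_univ S)
      fun p _ _ => mul_nonneg (hγ0 p) (abs_nonneg _)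
  -- Step 3: Cauchy-Schwarz
  have hT0 : 0 ≤ T := Finset.sum_nonneg fun p _ => mul_nonneg (hγ0 p) (sq_nonneg _)
  have step3 : ∑ p, γ p * |A p.1 - A p.2| ≤ Real.sqrt T := by
    rw [Real.le_sqrt (Finset.sum_nonneg fun p _ => mul_nonneg (hγ0 p) (abs_nonneg _)) hT0]
    have cs := Finset.sum_mul_sq_le_sq_mul_sq univ (fun p => Real.sqrt (γ p))
      (fun p => Real.sqrt (γ p) * |A p.1 - A p.2|)
    have e1 : ∀ p : (Fin n → Ω) × (Fin n → Ω),
        Real.sqrt (γ p) * (Real.sqrt (γ p) * |A p.1 - A p.2|) = γ p * |A p.1 - A p.2| := by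
      intro p; rw [← mul_assoc, Real.mul_self_sqrt (hγ0 p)]
    have e2 : ∀ p : (Fin n → Ω) × (Fin n → Ω), Real.sqrt (γ p) ^ 2 = γ p :=
      fun p => Real.sq_sqrt (hγ0 p)
    have e3 : ∀ p : (Fin n → Ω) × (Fin n → Ω),
        (Real.sqrt (γ p) * |A p.1 - A p.2|) ^ 2 = γ p * (A p.1 - A p.2) ^ 2 := by
      intro p; rw [mul_pow, Real.sq_sqrt (hγ0 p), sq_abs]
    simp only [e1, e2, e3] at cs
    rwa [hγ1, one_mul] at cs
  -- Step 4: moment identities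
  have hM1 : ∑ σ, μ σ * A σ = ∑ x ∈ X, q x ω := by
    have e : ∀ σ, μ σ * A σ = ∑ x ∈ X, (if σ x = ω then μ σ else 0) := by
      intro σ
      simp only [hAdef]
      rw [Finset.mul_sum]
      exact Finset.sum_congr rfl fun x _ => by by_cases h : σ x = ω <;> simp [h]
    simp only [e]
    rw [Finset.sum_comm]
    exact Finset.sum_congr rfl fun x _ => rfl
  have hN1 : ∑ τ, ν τ * A τ = ∑ x ∈ X, q x ω := by
    have e : ∀ τ, ν τ * A τ = ∑ x ∈ X, (if τ x = ω then (1 : ℝ) else 0) * ν τ := by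
      intro τ
      simp only [hAdef]
      rw [Finset.mul_sum]
      exact Finset.sum_congr rfl fun x _ => mul_comm _ _
    simp only [e]
    rw [Finset.sum_comm]
    exact Finset.sum_congr rfl fun x _ => sum_ind_prod q hq1 x ω
  have hM2 : ∑ σ, μ σ * (A σ) ^ 2 = ∑ x ∈ X, ∑ y ∈ X, marg2 μ x y ω ω := by
    have e : ∀ σ, μ σ * (A σ) ^ 2
        = ∑ x ∈ X, ∑ y ∈ X, (if σ x = ω ∧ σ y = ω then μ σ else 0) := by
      intro σ
      simp only [hAdef]
      rw [sq, Finset.sum_mul_sum, Finset.mul_sum]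
      refine Finset.sum_congr rfl fun x _ => ?_
      rw [Finset.mul_sum]
      refine Finset.sum_congr rfl fun y _ => ?_
      by_cases h1 : σ x = ω <;> by_cases h2 : σ y = ω <;> simp [h1, h2]
    simp only [e]
    rw [Finset.sum_comm]
    refine Finset.sum_congr rfl fun x _ => ?_
    rw [Finset.sum_comm]
    exact Finset.sum_congr rfl fun y _ => rfl
  have hN2 : ∑ τ, ν τ * (A τ) ^ 2
      = ∑ x ∈ X, ∑ y ∈ X, (if x = y then q x ω else q x ω * q y ω) := by
    have e : ∀ τ, ν τ * (A τ) ^ 2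
        = ∑ x ∈ X, ∑ y ∈ X,
            (if τ x = ω then (1 : ℝ) else 0) * (if τ y = ω then (1 : ℝ) else 0) * ν τ := by
      intro τ
      simp only [hAdef]
      rw [sq, Finset.sum_mul_sum, Finset.mul_sum]
      refine Finset.sum_congr rfl fun x _ => ?_
      rw [Finset.mul_sum]
      exact Finset.sum_congr rfl fun y _ => by ring
    simp only [e]
    rw [Finset.sum_comm]
    refine Finset.sum_congr rfl fun x _ => ?_
    rw [Finset.sum_comm]
    refine Finset.sum_congr rfl fun y _ => ?_
    by_cases hxy : x = y
    · subst hxy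
      rw [if_pos rfl]
      have e2 : ∀ τ : Fin n → Ω,
          (if τ x = ω then (1 : ℝ) else 0) * (if τ x = ω then (1 : ℝ) else 0) * ν τ
            = (if τ x = ω then (1 : ℝ) else 0) * ν τ := by
        intro τ; by_cases h : τ x = ω <;> simp [h]
      simp only [e2]
      exact sum_ind_prod q hq1 x ω
    · rw [if_neg hxy]
      exact sum_ind2_prod q hq1 hxy ω ω
  -- Step 5: expansion of T
  have hexp : T = (∑ σ, μ σ * (A σ) ^ 2)
      - 2 * (∑ σ, μ σ * A σ) * (∑ τ, ν τ * A τ) + (∑ τ, ν τ * (A τ) ^ 2) := by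
    rw [hTdef, Fintype.sum_prod_type]
    have hστ : ∀ σ, (∑ τ, γ (σ, τ) * (A (σ, τ).1 - A (σ, τ).2) ^ 2)
        = μ σ * (A σ) ^ 2 - (2 * (μ σ * A σ)) * (∑ τ, ν τ * A τ)
          + μ σ * (∑ τ, ν τ * (A τ) ^ 2) := by
      intro σ
      have e : ∀ τ, γ (σ, τ) * (A (σ, τ).1 - A (σ, τ).2) ^ 2
          = (μ σ * (A σ) ^ 2) * ν τ - (2 * (μ σ * A σ)) * (ν τ * A τ)
            + μ σ * (ν τ * (A τ) ^ 2) := by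
        intro τ; simp only [hγdef]; ring
      simp only [e]
      rw [Finset.sum_add_distrib, Finset.sum_sub_distrib, ← Finset.mul_sum, ← Finset.mul_sum,
        ← Finset.mul_sum, hν1, mul_one]
    simp only [hστ]
    rw [Finset.sum_add_distrib, Finset.sum_sub_distrib]
    have h1 : ∑ σ, (2 * (μ σ * A σ)) * (∑ τ, ν τ * A τ)
        = 2 * (∑ σ, μ σ * A σ) * (∑ τ, ν τ * A τ) := by
      rw [← Finset.sum_mul, ← Finset.mul_sum]
    have h2 : ∑ σ, μ σ * (∑ τ, ν τ * (A τ) ^ 2) = ∑ τ, ν τ * (A τ) ^ 2 := by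
      rw [← Finset.sum_mul, hμ.2, one_mul]
    rw [h1, h2]
  -- Step 6: combine into a double sum
  have hT_eq : T = ∑ x ∈ X, ∑ y ∈ X, (marg2 μ x y ω ω
      + (if x = y then q x ω else q x ω * q y ω) - 2 * (q x ω * q y ω)) := by
    rw [hexp, hM1, hN1, hM2, hN2, mul_assoc, Finset.sum_mul_sum]
    rw [Finset.mul_sum]
    have e : ∀ x, 2 * ∑ y ∈ X, q x ω * q y ω = ∑ y ∈ X, 2 * (q x ω * q y ω) :=
      fun x => Finset.mul_sum _ _ _
    simp only [e]
    simp only [Finset.sum_sub_distrib, Finset.sum_add_distrib]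
    ring
  -- Step 7: bound the summands
  have hterm : ∀ x ∈ X, ∀ y ∈ X, (marg2 μ x y ω ω
      + (if x = y then q x ω else q x ω * q y ω) - 2 * (q x ω * q y ω))
      ≤ (if x = y then (2 : ℝ) else D x y) := by
    intro x _ y _
    by_cases hxy : x = y
    · subst hxy
      rw [if_pos rfl, if_pos rfl]
      have hm : marg2 μ x x ω ω = q x ω := by
        simp only [hqdef]
        unfold marg2 marg
        exact Finset.sum_congr rfl fun σ _ => by by_cases h : σ x = ω <;> simp [h]
      rw [hm]
      have h0 := marg_nonneg μ hμ x ω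
      have h1 := marg_le_one μ hμ x ω
      simp only [hqdef]
      nlinarith
    · rw [if_neg hxy, if_neg hxy]
      have hp := point_le_dTV2 (marg2 μ x y) (fun a b => q x a * q y b)
        (marg2_sum_one μ hμ x y)
        (by rw [← Finset.sum_mul_sum, hq1, hq1, mul_one]) ω ω
      simp only [hDdef, hqdef]
      simp only [hqdef] at hp
      linarith
  have hT_le : T ≤ ∑ x : Fin n, ∑ y : Fin n, (if x = y then (2 : ℝ) else D x y) := by
    rw [hT_eq]
    have hnn : ∀ x y : Fin n, 0 ≤ (if x = y then (2 : ℝ) else D x y) := by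
      intro x y; by_cases h : x = y <;> simp [h, hD0 x y]
    refine le_trans (Finset.sum_le_sum fun x hx => Finset.sum_le_sum fun y hy =>
      hterm x hx y hy) ?_
    refine le_trans (Finset.sum_le_sum fun x _ =>
      Finset.sum_le_sum_of_subset_of_nonneg (Finset.subset_univ X)
        fun y _ _ => hnn x y) ?_
    exact Finset.sum_le_sum_of_subset_of_nonneg (Finset.subset_univ X)
      fun x _ _ => Finset.sum_nonneg fun y _ => hnn x y
  -- Step 8: split the full double sum
  have hsplit : ∑ x : Fin n, ∑ y : Fin n, (if x = y then (2 : ℝ) else D x y)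
      = 2 * n + 2 * Dsum := by
    have hdec : ∀ x y : Fin n, (if x = y then (2 : ℝ) else D x y)
        = (if x = y then (2 : ℝ) else 0) + (if x < y then D x y else 0)
          + (if y < x then D x y else 0) := by
      intro x y
      rcases lt_trichotomy x y with h|h|h
      · simp [h, h.ne, not_lt.mpr h.le]
      · simp [h, lt_irrefl]
      · simp [h, h.ne', not_lt.mpr h.le]
    simp only [hdec, Finset.sum_add_distrib]
    have s1 : ∑ x : Fin n, ∑ y : Fin n, (if x = y then (2 : ℝ) else 0) = 2 * n := by
      simp [Finset.sum_ite_eq, Finset.card_univ, mul_comm]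
    have s3 : ∑ x : Fin n, ∑ y : Fin n, (if y < x then D x y else 0)
        = ∑ x : Fin n, ∑ y : Fin n, (if x < y then D x y else 0) := by
      rw [Finset.sum_comm]
      refine Finset.sum_congr rfl fun x _ => Finset.sum_congr rfl fun y _ => ?_
      by_cases h : x < y
      · rw [if_pos h, if_pos h]
        simp only [hDdef]
        exact dTV2_prod_symm μ x y
      · rw [if_neg h, if_neg h]
    rw [s1, s3, hDsum_eq]
    ring
  -- Final chain
  have hL : (∑ p ∈ S, ∑ x ∈ X, (μ p.1 * ν p.2) *
      ((if p.1 x = ω then (1 : ℝ) else 0) - (if p.2 x = ω then 1 else 0)))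
      = ∑ p ∈ S, γ p * (A p.1 - A p.2) :=
    Finset.sum_congr rfl fun p _ => step1 p
  rw [hL]
  refine le_trans step2 (le_trans step3 ?_)
  refine Real.sqrt_le_sqrt ?_
  calc T ≤ ∑ x : Fin n, ∑ y : Fin n, (if x = y then (2 : ℝ) else D x y) := hT_le
    _ = 2 * n + 2 * Dsum := hsplit


end Aux

/-- Lemma (ε-symmetry gives closeness to the product measure in the cut metric):
for every `ε > 0` and finite `Ω` there is `n₀` such that for all `n ≥ n₀`, every
`(ε²/4)`-symmetric probability measure `μ` on `Ω^n` satisfies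
`Δ_⊘(μ, ⊗_i μ_i) < ε`. -/

theorem symmetric_close_to_product {Ω : Type*} [Fintype Ω] [DecidableEq Ω]
    (ε : ℝ) (hε : 0 < ε) :
    ∃ n₀ : ℕ, ∀ n : ℕ, n₀ ≤ n → ∀ μ : (Fin n → Ω) → ℝ, IsProb μ →
      DeltaSymmetric (ε ^ 2 / 4) μ →
      cutDiscS n μ (prodOfMarginals μ) < ε := by
  classical
  refine ⟨⌈4 / ε ^ 2⌉₊ + 1, fun n hn μ hμ hsym => ?_⟩
  have hn1 : 0 < n := lt_of_lt_of_le (Nat.succ_pos _) hn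
  have hnR : 0 < (n : ℝ) := by exact_mod_cast hn1
  have h4 : 4 < ε ^ 2 * n := by
    have h1 : 4 / ε ^ 2 < (n : ℝ) := by
      calc 4 / ε ^ 2 ≤ (⌈4 / ε ^ 2⌉₊ : ℝ) := Nat.le_ceil _
        _ < n := by exact_mod_cast Nat.lt_of_lt_of_le (Nat.lt_succ_self _) hn
    have hε2 : 0 < ε ^ 2 := by positivity
    calc (4 : ℝ) = (4 / ε ^ 2) * ε ^ 2 := by field_simp
      _ < n * ε ^ 2 := by exact mul_lt_mul_of_pos_right h1 hε2
      _ = ε ^ 2 * n := by ring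
  haveI hΩ : Nonempty Ω := by
    by_contra h
    rw [not_nonempty_iff] at h
    haveI := h
    haveI : Nonempty (Fin n) := ⟨⟨0, hn1⟩⟩
    haveI hne : IsEmpty (Fin n → Ω) := Function.isEmpty (fun g : Fin n → Ω => g ⟨0, hn1⟩)
    have h2 := hμ.2
    rw [Finset.univ_eq_empty, Finset.sum_empty] at h2
    exact zero_ne_one h2
  set ν : (Fin n → Ω) → ℝ := prodOfMarginals μ with hνdef
  set γ : ((Fin n → Ω) × (Fin n → Ω)) → ℝ := fun p => μ p.1 * ν p.2 with hγdef
  set Dsum : ℝ := ∑ i : Fin n, ∑ i' : Fin n, (if i < i' then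
      dTV2 (marg2 μ i i') (fun ω ω' => marg μ i ω * marg μ i' ω') else 0) with hDsumdef
  have hDsym : Dsum < ε ^ 2 / 4 * n ^ 2 := hsym
  set K : ℝ := Real.sqrt (2 * n + 2 * Dsum) / n with hKdef
  -- the candidate value of the coupling
  set d₀ : ℝ := ⨆ S : Finset ((Fin n → Ω) × (Fin n → Ω)), ⨆ X : Finset (Fin n), ⨆ ω : Ω,
      |∑ p ∈ S, ∑ x ∈ X,
        γ p * ((if p.1 x = ω then (1 : ℝ) else 0) - (if p.2 x = ω then 1 else 0))| / n
    with hd₀def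
  have hmem : d₀ ∈ { d | ∃ γ : ((Fin n → Ω) × (Fin n → Ω)) → ℝ,
      (∀ p, 0 ≤ γ p) ∧ (∀ σ, ∑ τ, γ (σ, τ) = μ σ) ∧ (∀ τ, ∑ σ, γ (σ, τ) = ν τ) ∧
      d = ⨆ S : Finset ((Fin n → Ω) × (Fin n → Ω)), ⨆ X : Finset (Fin n), ⨆ ω : Ω,
        |∑ p ∈ S, ∑ x ∈ X,
          γ p * ((if p.1 x = ω then (1 : ℝ) else 0) - (if p.2 x = ω then 1 else 0))| / n } := by
    refine ⟨γ, fun p => mul_nonneg (hμ.1 p.1) (prodOfMarginals_nonneg μ hμ p.2), ?_, ?_, rfl⟩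
    · intro σ
      simp only [hγdef]
      rw [← Finset.mul_sum, prodOfMarginals_sum_one μ hμ, mul_one]
    · intro τ
      simp only [hγdef]
      rw [← Finset.sum_mul, hμ.2, one_mul]
  have hbdd : BddBelow { d | ∃ γ : ((Fin n → Ω) × (Fin n → Ω)) → ℝ,
      (∀ p, 0 ≤ γ p) ∧ (∀ σ, ∑ τ, γ (σ, τ) = μ σ) ∧ (∀ τ, ∑ σ, γ (σ, τ) = ν τ) ∧
      d = ⨆ S : Finset ((Fin n → Ω) × (Fin n → Ω)), ⨆ X : Finset (Fin n), ⨆ ω : Ω,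
        |∑ p ∈ S, ∑ x ∈ X,
          γ p * ((if p.1 x = ω then (1 : ℝ) else 0) - (if p.2 x = ω then 1 else 0))| / n } := by
    refine ⟨0, ?_⟩
    rintro d ⟨γ', -, -, -, rfl⟩
    set F : Finset ((Fin n → Ω) × (Fin n → Ω)) → ℝ := fun S => ⨆ X : Finset (Fin n), ⨆ ω : Ω,
      |∑ p ∈ S, ∑ x ∈ X,
        γ' p * ((if p.1 x = ω then (1 : ℝ) else 0) - (if p.2 x = ω then 1 else 0))| / n
      with hFdef
    have h0 : F ∅ = 0 := by
      simp only [hFdef, Finset.sum_empty, abs_zero, zero_div]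
      simp [ciSup_const]
    have := le_ciSup (f := F) (Set.finite_range F).bddAbove (∅ : Finset _)
    rw [h0] at this
    exact this
  have hd₀K : d₀ ≤ K := by
    rw [hd₀def]
    refine ciSup_le fun S => ciSup_le fun X => ciSup_le fun ω => ?_
    rw [hKdef]
    rw [div_le_div_iff_of_pos_right hnR]
    simp only [hγdef]
    exact main_bound μ hμ S X ω
  have hK : K < ε := by
    have hC : 2 * (n : ℝ) + 2 * Dsum < (ε * n) ^ 2 := by nlinarith
    have hs : Real.sqrt (2 * n + 2 * Dsum) < ε * n := (Real.sqrt_lt' (by positivity)).mpr hC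
    rw [hKdef, div_lt_iff₀ hnR]
    linarith
  calc cutDiscS n μ (prodOfMarginals μ) ≤ d₀ := csInf_le hbdd hmem
    _ ≤ K := hd₀K
    _ < ε := hK
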